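/- Let Q be an open polygonal curve in ℝ³ with total curvature strictly less than π/2, starting at q₀ with first direction d = (q₁ - q₀)/‖q₁ - q₀‖. Then every point x of Q other than q₀ satisfies ⟨x - q₀, d⟩ > 0; i.e., the curve minus its initial point lies strictly in the open half-space on the positive side of the normal plane at q₀. -/

import Mathlib

open Real InnerProductGeometry

/-!
By the triangle inequality for angles, the angle between the `j`-th edge and the first
edge is at most the total curvature at the vertices `q 1, …, q j`, hence `< π/2`. So every
edge has a positive component along `d`, and the height `⟪x - q 0, d⟫` increases
strictly along the curve.
-/

/-- The piecewise linear path through the points `q 0, q 1, q 2, …`. -/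
noncomputable def plPath (q : ℕ → EuclideanSpace ℝ (Fin 3)) (t : ℝ) :
    EuclideanSpace ℝ (Fin 3) :=
  q ⌊t⌋₊ + (t - ⌊t⌋₊) • (q (⌊t⌋₊ + 1) - q ⌊t⌋₊)

open Finset RealInnerProductSpace

section
variable {V : Type*} [NormedAddCommGroup V] [InnerProductSpace ℝ V]

theorem InnerProductGeometry.inner_pos_of_angle_lt_pi_div_two {x y : V}
    (h : angle x y < π / 2) : 0 < ⟪x, y⟫ := by
  have hcos : 0 < cos (angle x y) := cos_pos_of_mem_Ioo ⟨by linarith [angle_nonneg x y], h⟩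
  rw [cos_angle] at hcos
  by_contra! hle
  exact hcos.not_ge (div_nonpos_of_nonpos_of_nonneg hle (by positivity))

theorem angle_edge_first_edge_le_sum (q : ℕ → V) (hq : q 1 ≠ q 0) (j : ℕ) :
    angle (q (j + 1) - q j) (q 1 - q 0) ≤
      ∑ m ∈ Ico 1 (j + 1), angle (q (m + 1) - q m) (q m - q (m - 1)) := by
  induction j with
  | zero => simp [angle_self (sub_ne_zero.2 hq)]
  | succ j ih =>
    rw [sum_Ico_succ_top (by omega), Nat.add_sub_cancel]
    linarith [angle_le_angle_add_angle (q (j + 1 + 1) - q (j + 1)) (q (j + 1) - q j) (q 1 - q 0)]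

theorem inner_edge_first_edge_pos (q : ℕ → V) {n : ℕ} (hq : q 1 ≠ q 0)
    (htc : ∑ m ∈ Ico 1 n, angle (q (m + 1) - q m) (q m - q (m - 1)) < π / 2)
    {j : ℕ} (hj : j < n) : 0 < ⟪q (j + 1) - q j, q 1 - q 0⟫ := by
  refine inner_pos_of_angle_lt_pi_div_two ((angle_edge_first_edge_le_sum q hq j).trans_lt ?_)
  refine lt_of_le_of_lt ?_ htc
  exact sum_le_sum_of_subset_of_nonneg (Ico_subset_Ico le_rfl hj) fun _ _ _ ↦ angle_nonneg _ _

theorem inner_sub_first_eq_sum (q : ℕ → V) (d : V) (k : ℕ) :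
    ⟪q k - q 0, d⟫ = ∑ j ∈ range k, ⟪q (j + 1) - q j, d⟫ := by
  rw [← sum_range_sub, sum_inner]

theorem inner_vertex_sub_first_nonneg {q : ℕ → V} {d : V} {n : ℕ}
    (hedge : ∀ j < n, 0 < ⟪q (j + 1) - q j, d⟫) {k : ℕ} (hk : k ≤ n) :
    0 ≤ ⟪q k - q 0, d⟫ := by
  rw [inner_sub_first_eq_sum]
  exact sum_nonneg fun j hj ↦ (hedge j ((mem_range.1 hj).trans_le hk)).le

theorem inner_vertex_sub_first_pos {q : ℕ → V} {d : V} {n : ℕ}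
    (hedge : ∀ j < n, 0 < ⟪q (j + 1) - q j, d⟫) {k : ℕ} (hk0 : k ≠ 0) (hk : k ≤ n) :
    0 < ⟪q k - q 0, d⟫ := by
  rw [inner_sub_first_eq_sum]
  exact sum_pos (fun j hj ↦ hedge j ((mem_range.1 hj).trans_le hk)) (nonempty_range_iff.2 hk0)

end

theorem inner_plPath_sub_first_pos {q : ℕ → EuclideanSpace ℝ (Fin 3)}
    {d : EuclideanSpace ℝ (Fin 3)} {n : ℕ} (hedge : ∀ j < n, 0 < ⟪q (j + 1) - q j, d⟫)
    {t : ℝ} (ht : t ∈ Set.Icc (0 : ℝ) n) (hne : plPath q t ≠ q 0) :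
    0 < ⟪plPath q t - q 0, d⟫ := by
  set j := ⌊t⌋₊ with hj
  have hjt : (j : ℝ) ≤ t := Nat.floor_le ht.1
  have hjn : j ≤ n := Nat.floor_le_of_le ht.2
  have hsplit : plPath q t - q 0 = (q j - q 0) + (t - j) • (q (j + 1) - q j) := by
    rw [plPath, ← hj]; abel
  rw [hsplit, inner_add_left, real_inner_smul_left]
  rcases (sub_nonneg.2 hjt).eq_or_lt with hs | hs
  · have hj0 : j ≠ 0 := by
      rintro hj0
      apply hne
      rw [plPath, ← hj, ← hs, zero_smul, add_zero, hj0]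
    rw [← hs, zero_mul, add_zero]
    exact inner_vertex_sub_first_pos hedge hj0 hjn
  · have hjn' : j < n := by exact_mod_cast (sub_pos.1 hs).trans_le ht.2
    exact add_pos_of_nonneg_of_pos (inner_vertex_sub_first_nonneg hedge hjn)
      (mul_pos hs (hedge j hjn'))

theorem polygon_in_open_halfspace_general (n : ℕ)
    (q : ℕ → EuclideanSpace ℝ (Fin 3))
    (hcons : ∀ j < n, q j ≠ q (j + 1))
    (htc : ∑ m ∈ Finset.Ico 1 n,
      InnerProductGeometry.angle (q (m + 1) - q m) (q m - q (m - 1)) < Real.pi / 2) :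
    ∀ t ∈ Set.Icc (0 : ℝ) n, plPath q t ≠ q 0 →
      0 < (inner ℝ (plPath q t - q 0) (‖q 1 - q 0‖⁻¹ • (q 1 - q 0)) : ℝ) := by
  intro t ht hne
  have hedge : ∀ j < n, 0 < ⟪q (j + 1) - q j, q 1 - q 0⟫ := fun j hj ↦
    inner_edge_first_edge_pos q (hcons 0 (by omega)).symm htc hj
  have hpos := inner_plPath_sub_first_pos hedge ht hne
  have hd : q 1 - q 0 ≠ 0 := by
    rintro hd
    rw [hd, inner_zero_right] at hpos
    exact hpos.false
  rw [real_inner_smul_right]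
  exact mul_pos (inv_pos.2 (norm_pos_iff.2 hd)) hpos

/-- If an open polygonal curve `Q` with all consecutive vertices distinct has total
curvature strictly less than `π/2`, then every point of `Q` other than the initial
vertex `q 0` lies strictly in the open half-space on the positive side of the normal
plane at `q 0`, where the normal direction is `d = (q 1 - q 0)/‖q 1 - q 0‖`. -/
theorem polygon_in_open_halfspace (n : ℕ) (hn : 1 ≤ n)
    (q : ℕ → EuclideanSpace ℝ (Fin 3))
    (hcons : ∀ j < n, q j ≠ q (j + 1))
    (htc : ∑ m ∈ Finset.Ico 1 n,
      InnerProductGeometry.angle (q (m + 1) - q m) (q m - q (m - 1)) < Real.pi / 2) :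
    ∀ t ∈ Set.Icc (0 : ℝ) n, plPath q t ≠ q 0 →
      0 < (inner ℝ (plPath q t - q 0) (‖q 1 - q 0‖⁻¹ • (q 1 - q 0)) : ℝ) :=
  polygon_in_open_halfspace_general n q hcons htc
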